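/- arXiv:2309.02651 — 2 statements merged into one kernel-verified Lean document; each statement's English description precedes it below -/
import Mathlib

section
/- Let X be a finite set, p a probability mass function on X with p(x) > 0 for all x, and p₊(x,z) = ∑_{x'} p(x')·q(x|x')·q(z|x') for conditional probability kernels q(·|x'). Then the positive-pair kernel K₊(x,z) = p₊(x,z)/(p(x)p(z)) is positive semidefinite. -/
def IsPSDKernel {X : Type*} (K : X → X → ℝ) : Prop :=
  (∀ x z, K x z = K z x) ∧
  ∀ (n : ℕ) (x : Fin n → X) (a : Fin n → ℝ),
    0 ≤ ∑ i, ∑ j, a i * a j * K (x i) (x j)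

theorem positive_pair_kernel_psd {X : Type*} [Fintype X]
    (p : X → ℝ) (hp_pos : ∀ x, 0 < p x) (hp_sum : ∑ x, p x = 1)
    (q : X → X → ℝ) (hq_nonneg : ∀ x x', 0 ≤ q x x')
    (hq_sum : ∀ x', ∑ x, q x x' = 1) :
    IsPSDKernel (fun x z =>
      (∑ x', p x' * q x x' * q z x') / (p x * p z)) := by
  constructor
  · intro x z
    simp only
    rw [mul_comm (p x)]
    congr 1
    exact Finset.sum_congr rfl (fun x' _ => by ring)
  · intro n x a
    have key : ∀ i j : Fin n,
        a i * a j * ((∑ x', p x' * q (x i) x' * q (x j) x') / (p (x i) * p (x j)))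
        = ∑ x', p x' * ((a i * q (x i) x' / p (x i)) * (a j * q (x j) x' / p (x j))) := by
      intro i j
      rw [Finset.sum_div, Finset.mul_sum]
      refine Finset.sum_congr rfl (fun x' _ => ?_)
      field_simp
    simp only [key]
    have h1 : ∀ i : Fin n, ∑ j : Fin n, ∑ x',
        p x' * ((a i * q (x i) x' / p (x i)) * (a j * q (x j) x' / p (x j)))
        = ∑ x', ∑ j : Fin n,
        p x' * ((a i * q (x i) x' / p (x i)) * (a j * q (x j) x' / p (x j))) :=
      fun i => Finset.sum_comm ..
    simp only [h1]
    rw [Finset.sum_comm]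
    refine Finset.sum_nonneg (fun x' _ => ?_)
    have : ∑ i : Fin n, ∑ j : Fin n,
        p x' * ((a i * q (x i) x' / p (x i)) * (a j * q (x j) x' / p (x j)))
        = p x' * (∑ i : Fin n, a i * q (x i) x' / p (x i)) ^ 2 := by
      rw [sq, Finset.sum_mul_sum, Finset.mul_sum]
      refine Finset.sum_congr rfl (fun i _ => ?_)
      rw [Finset.mul_sum]
    rw [this]
    exact mul_nonneg (hp_pos x').le (sq_nonneg _)
end

section
/- Let X be finite, p a strictly positive probability mass function on X, p₊ a probability mass function on X × X, φ: X → ℝ^d, and F the |X|×d matrix with row x equal to √p(x)·φ(x). Let Ā be the matrix with entries Ā_{xz} = p₊(x,z)/(√p(x)·√p(z)). Then the spectral contrastive loss L(φ) = −2·∑_{x,z} p₊(x,z)·φ(x)ᵀφ(z) + ∑_{x,z} p(x)p(z)·(φ(x)ᵀφ(z))² satisfies L(φ) = ‖Ā − FFᵀ‖_F² − ∑_{x,z} p₊(x,z)²/(p(x)p(z)); in particular L(φ) and ‖Ā − FFᵀ‖_F² differ by a constant independent of φ. -/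
open Matrix

/-- Equivalence between the spectral contrastive loss and low-rank
factorization of the normalized positive-pair matrix `Ā` (HaoChen et al.):
`L(φ) = ‖Ā − F Fᵀ‖_F² − ∑_{x,z} p₊(x,z)² / (p x · p z)`. -/
theorem spectral_contrastive_loss_eq (X : Type*) [Fintype X] (d : ℕ)
    (p : X → ℝ) (hp_pos : ∀ x, 0 < p x) (hp_sum : ∑ x, p x = 1)
    (pp : X → X → ℝ) (hpp_nonneg : ∀ x z, 0 ≤ pp x z)
    (hpp_sum : ∑ x, ∑ z, pp x z = 1)
    (φ : X → Fin d → ℝ) :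
    let F : Matrix X (Fin d) ℝ := Matrix.of fun x i => Real.sqrt (p x) * φ x i
    let Abar : Matrix X X ℝ :=
      Matrix.of fun x z => pp x z / (Real.sqrt (p x) * Real.sqrt (p z))
    let L : ℝ :=
      -2 * ∑ x, ∑ z, pp x z * (∑ i, φ x i * φ z i) +
        ∑ x, ∑ z, p x * p z * (∑ i, φ x i * φ z i) ^ 2
    L = (∑ x, ∑ z, ((Abar - F * Fᵀ) x z) ^ 2) -
        ∑ x, ∑ z, (pp x z) ^ 2 / (p x * p z) := by
  intro F Abar L
  have key : ∀ x z, ((Abar - F * Fᵀ) x z) ^ 2 =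
      pp x z ^ 2 / (p x * p z) - 2 * (pp x z * (∑ i, φ x i * φ z i))
        + p x * p z * (∑ i, φ x i * φ z i) ^ 2 := by
    intro x z
    have hx := hp_pos x
    have hz := hp_pos z
    have hsx : Real.sqrt (p x) ^ 2 = p x := Real.sq_sqrt hx.le
    have hsz : Real.sqrt (p z) ^ 2 = p z := Real.sq_sqrt hz.le
    have hsx0 : Real.sqrt (p x) ≠ 0 := by positivity
    have hsz0 : Real.sqrt (p z) ≠ 0 := by positivity
    have hFF : (F * Fᵀ) x z = Real.sqrt (p x) * Real.sqrt (p z) * (∑ i, φ x i * φ z i) := by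
      simp only [F, Matrix.mul_apply, Matrix.transpose_apply, Matrix.of_apply,
        Finset.mul_sum]
      apply Finset.sum_congr rfl
      intro i _
      ring
    have hA : (Abar - F * Fᵀ) x z =
        pp x z / (Real.sqrt (p x) * Real.sqrt (p z))
          - Real.sqrt (p x) * Real.sqrt (p z) * (∑ i, φ x i * φ z i) := by
      simp [Abar, hFF, Matrix.sub_apply]
    rw [hA]
    set s := Real.sqrt (p x) with hs
    set t := Real.sqrt (p z) with ht
    rw [← hsx, ← hsz]
    field_simp
    ring
  simp only [Finset.sum_congr rfl fun x _ => Finset.sum_congr rfl fun z _ => key x z]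
  simp only [Finset.sum_sub_distrib, Finset.sum_add_distrib, ← Finset.mul_sum, L]
  ring
end
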